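/- Let $P\subset\mathbb{R}^d$ be a polytope (convex hull of finitely many points). Then there is a constant $K$ depending only on $P$ such that for every $x\in\mathbb{R}^d$ and every real $t>1$, $\big|\,|(tP-x)\cap\mathbb{Z}^d| - \lambda(P)t^d\,\big| \le K t^{d-1}$. -/

import Mathlib

/-
Unit cubes at integer points tile space, so the number of integer points of a set `A` lies
between the volumes of `{y | closedBall y 1 ⊆ A}` and of `A + closedBall 0 1`. If the convex
body `P` contains the ball of radius `ρ` about the origin, then
`(t - 1/ρ) • P + closedBall 0 1 ⊆ t • P` and `t • P + closedBall 0 1 ⊆ (t + 1/ρ) • P`, and the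
volumes `(t ± 1/ρ)^d vol P` differ from `t^d vol P` by `O(t^(d-1))`. If `P` has empty interior,
it lies in a hyperplane `f = b` and has volume zero; forgetting a coordinate `i₀` with
`f (e i₀) ≠ 0` is injective on the hyperplane, so the integer points of `t • P - x` are at most
those of a `(d-1)`-dimensional cube of side `O(t)`.
-/

open Set Pointwise MeasureTheory Metric Bornology

variable {ι : Type*}

def intPoints (ι : Type*) : Set (ι → ℝ) := {p | ∀ i, ∃ n : ℤ, p i = n}

def unitCube (ι : Type*) : Set (ι → ℝ) := univ.pi fun _ => Ico 0 1

lemma floor_mem_intPoints (y : ι → ℝ) : (fun i => (⌊y i⌋ : ℝ)) ∈ intPoints ι :=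
  fun i => ⟨⌊y i⌋, rfl⟩

lemma sub_floor_mem_unitCube (y : ι → ℝ) : y - (fun i => (⌊y i⌋ : ℝ)) ∈ unitCube ι :=
  fun i _ => ⟨Int.fract_nonneg (y i), Int.fract_lt_one (y i)⟩

lemma eq_floor_of_sub_mem_unitCube {p y : ι → ℝ} (hp : p ∈ intPoints ι)
    (h : y - p ∈ unitCube ι) : p = fun i => (⌊y i⌋ : ℝ) := by
  funext i
  obtain ⟨n, hn⟩ := hp i
  have hi := h i (mem_univ i)
  simp only [Pi.sub_apply, mem_Ico, sub_nonneg, hn] at hi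
  rw [hn, Int.floor_eq_iff.mpr ⟨hi.1, by linarith⟩]

variable [Fintype ι]

lemma intPoints_countable : (intPoints ι).Countable := by
  refine (countable_range fun n : ι → ℤ => fun i => (n i : ℝ)).mono fun p hp => ?_
  choose n hn using hp
  exact ⟨n, funext fun i => (hn i).symm⟩

lemma unitCube_subset_closedBall : unitCube ι ⊆ closedBall 0 1 := fun w hw => by
  refine mem_closedBall_zero_iff.mpr ((pi_norm_le_iff_of_nonneg zero_le_one).mpr fun i => ?_)
  obtain ⟨h0, h1⟩ := hw i (mem_univ i)
  rw [Real.norm_of_nonneg h0]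
  exact h1.le

lemma volume_add_unitCube {S : Set (ι → ℝ)} (hS : S ⊆ intPoints ι) :
    volume (S + unitCube ι) = S.encard := by
  have hdisj : S.PairwiseDisjoint (· +ᵥ unitCube ι) := fun p hp q hq hpq => by
    refine disjoint_left.mpr fun y hyp hyq => hpq ?_
    rw [mem_vadd_set_iff_neg_vadd_mem, vadd_eq_add, neg_add_eq_sub] at hyp hyq
    rw [eq_floor_of_sub_mem_unitCube (hS hp) hyp, eq_floor_of_sub_mem_unitCube (hS hq) hyq]
  have hvol : volume (unitCube ι) = 1 := by simp [unitCube, volume_pi_pi, Real.volume_Ico]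
  calc volume (S + unitCube ι) = volume (⋃ p ∈ S, p +ᵥ unitCube ι) := by
        rw [← iUnion_add_left_image]; rfl
    _ = ∑' _ : S, 1 := by
        rw [measure_biUnion (intPoints_countable.mono hS) hdisj fun p _ =>
          (MeasurableSet.univ_pi fun _ => measurableSet_Ico).const_vadd p]
        simp only [measure_vadd, hvol]
    _ = S.encard := ENNReal.tsum_set_one S

lemma encard_le_volume_of_add_closedBall_subset {S B : Set (ι → ℝ)} (hS : S ⊆ intPoints ι)
    (h : S + closedBall 0 1 ⊆ B) : (S.encard : ENNReal) ≤ volume B := by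
  rw [← volume_add_unitCube hS]
  exact measure_mono ((add_subset_add_left unitCube_subset_closedBall).trans h)

lemma volume_le_encard_inter_intPoints {A B : Set (ι → ℝ)}
    (h : A + closedBall 0 1 ⊆ B) : volume A ≤ (B ∩ intPoints ι).encard := by
  rw [← volume_add_unitCube inter_subset_right]
  refine measure_mono fun y hy => ?_
  set p : ι → ℝ := fun i => (⌊y i⌋ : ℝ)
  have hyp : y - p ∈ closedBall 0 1 := unitCube_subset_closedBall (sub_floor_mem_unitCube y)
  have hpB : p ∈ B := h ⟨y, hy, p - y, by rwa [mem_closedBall_zero_iff, norm_sub_rev,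
    ← mem_closedBall_zero_iff], add_sub_cancel y p⟩
  exact ⟨p, ⟨hpB, floor_mem_intPoints y⟩, y - p, sub_floor_mem_unitCube y, add_sub_cancel p y⟩

lemma ncard_le_toReal_volume_of_add_closedBall_subset {S B : Set (ι → ℝ)}
    (hS : S ⊆ intPoints ι) (h : S + closedBall 0 1 ⊆ B) (hB : volume B ≠ ⊤) :
    (S.ncard : ℝ) ≤ (volume B).toReal := by
  have hle : ((S.ncard : ℕ∞) : ENNReal) ≤ volume B :=
    (ENat.toENNReal_le.mpr S.ncard_le_encard).trans
      (encard_le_volume_of_add_closedBall_subset hS h)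
  simpa using ENNReal.toReal_mono hB hle

lemma Bornology.IsBounded.finite_inter_intPoints {A : Set (ι → ℝ)} (hA : IsBounded A) :
    (A ∩ intPoints ι).Finite := by
  refine encard_lt_top_iff.mp (ENat.toENNReal_lt_top.mp ?_)
  refine (encard_le_volume_of_add_closedBall_subset inter_subset_right
    (add_subset_add_right inter_subset_left)).trans_lt ?_
  exact (hA.add isBounded_closedBall).measure_lt_top

lemma toReal_volume_le_ncard_inter_intPoints {A B : Set (ι → ℝ)}
    (h : A + closedBall 0 1 ⊆ B) (hB : IsBounded B) :
    (volume A).toReal ≤ ((B ∩ intPoints ι).ncard : ℝ) := by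
  have hle := volume_le_encard_inter_intPoints h
  rw [← hB.finite_inter_intPoints.cast_ncard_eq, ENat.toENNReal_coe] at hle
  simpa using ENNReal.toReal_mono (ENNReal.natCast_ne_top _) hle

lemma Convex.smul_add_closedBall_subset {E : Type*} [NormedAddCommGroup E] [NormedSpace ℝ E]
    {P : Set E} (hP : Convex ℝ P) {ρ s r : ℝ} (hρ : 0 < ρ) (hball : closedBall 0 ρ ⊆ P)
    (hs : 0 ≤ s) (hr : 0 ≤ r) : s • P + closedBall 0 r ⊆ (s + r / ρ) • P :=
  calc s • P + closedBall 0 r = s • P + (r / ρ) • closedBall 0 ρ := by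
        rw [smul_closedBall _ _ hρ.le, smul_zero, Real.norm_of_nonneg (by positivity),
          div_mul_cancel₀ r hρ.ne']
    _ ⊆ s • P + (r / ρ) • P := add_subset_add_left (smul_set_mono hball)
    _ = (s + r / ρ) • P := (hP.add_smul hs (by positivity)).symm

lemma abs_sub_mul_pow_le_of_bounds {N v a t : ℝ} (d : ℕ) (hN : 0 ≤ N) (hv : 0 ≤ v) (ha : 0 ≤ a)
    (ht : 1 ≤ t) (hup : N ≤ v * (t + a) ^ d) (hlow : a ≤ t → v * (t - a) ^ d ≤ N) :
    |N - v * t ^ d| ≤ v * a * (d * (1 + a) ^ (d - 1) + 1) * t ^ (d - 1) := by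
  have ht0 : 0 ≤ t := by linarith
  set B := a * d * (1 + a) ^ (d - 1) * t ^ (d - 1)
  have hpow : ∀ y, |t - y| ≤ a → |y| ≤ t + a → |t ^ d - y ^ d| ≤ B := fun y hty hy =>
    calc |t ^ d - y ^ d| ≤ |t - y| * d * max |t| |y| ^ (d - 1) := abs_pow_sub_pow_le ..
      _ ≤ a * d * ((1 + a) * t) ^ (d - 1) := by
          gcongr
          rw [abs_of_nonneg ht0]
          exact max_le (by nlinarith) (by nlinarith)
      _ = B := by rw [mul_pow, ← mul_assoc]
  have hK : v * a * (d * (1 + a) ^ (d - 1) + 1) * t ^ (d - 1)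
      = v * B + v * (a * t ^ (d - 1)) := by ring
  have hvat : 0 ≤ v * (a * t ^ (d - 1)) := by positivity
  rw [hK, abs_sub_le_iff]
  constructor
  · have hup' := hpow (t + a) (by simp [abs_of_nonneg ha]) (by rw [abs_of_nonneg (by linarith)])
    rw [abs_sub_comm] at hup'
    have := mul_le_mul_of_nonneg_left (abs_le.mp hup').2 hv
    linarith
  · rcases le_or_gt a t with hat | hta
    · have hlow' := hpow (t - a) (by simp [abs_of_nonneg ha])
        (by rw [abs_of_nonneg (by linarith)]; linarith)
      have := mul_le_mul_of_nonneg_left (abs_le.mp hlow').2 hv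
      linarith [hlow hat]
    · have htd : t ^ d ≤ a * t ^ (d - 1) := by
        rcases d with _ | d
        · simp only [pow_zero, Nat.zero_sub, mul_one]; linarith
        · rw [pow_succ', Nat.add_sub_cancel]
          exact mul_le_mul_of_nonneg_right hta.le (by positivity)
      have hB : 0 ≤ v * B := by positivity
      linarith [mul_le_mul_of_nonneg_left htd hv]

def LatticeCountEstimate (P : Set (ι → ℝ)) : Prop :=
  ∃ K : ℝ, ∀ x : ι → ℝ, ∀ t : ℝ, 1 < t →
    |((((-x) +ᵥ t • P) ∩ intPoints ι).ncard : ℝ) - (volume P).toReal * t ^ Fintype.card ι|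
      ≤ K * t ^ (Fintype.card ι - 1)

lemma LatticeCountEstimate.vadd {P : Set (ι → ℝ)} (h : LatticeCountEstimate P) (c : ι → ℝ) :
    LatticeCountEstimate (c +ᵥ P) := by
  obtain ⟨K, hK⟩ := h
  refine ⟨K, fun x t ht => ?_⟩
  have hshift : (-x) +ᵥ t • (c +ᵥ P) = (-(x - t • c)) +ᵥ t • P := by
    ext p
    simp only [mem_vadd_set, mem_smul_set, vadd_eq_add, exists_exists_and_eq_and, smul_add]
    constructor <;> rintro ⟨q, hq, rfl⟩ <;> exact ⟨q, hq, by abel⟩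
  rw [hshift, measure_vadd]
  exact hK _ t ht

lemma latticeCountEstimate_of_closedBall_subset {P : Set (ι → ℝ)} (hP : Convex ℝ P)
    (hb : IsBounded P) {ρ : ℝ} (hρ : 0 < ρ) (hball : closedBall 0 ρ ⊆ P) :
    LatticeCountEstimate P := by
  set a := 1 / ρ
  set v := (volume P).toReal
  have hvol : ∀ (x : ι → ℝ) {s : ℝ}, 0 ≤ s →
      (volume ((-x) +ᵥ s • P)).toReal = s ^ Fintype.card ι * v := fun x s hs => by
    rw [measure_vadd, Measure.addHaar_smul_of_nonneg _ hs, Module.finrank_fintype_fun_eq_card,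
      ENNReal.toReal_mul, ENNReal.toReal_ofReal (by positivity)]
  have hgrow : ∀ {s : ℝ}, 0 ≤ s → ∀ x : ι → ℝ,
      ((-x) +ᵥ s • P) + closedBall 0 1 ⊆ (-x) +ᵥ (s + a) • P := fun hs x => by
    rw [vadd_add_assoc]
    exact vadd_set_mono (hP.smul_add_closedBall_subset hρ hball hs zero_le_one)
  refine ⟨v * a * (Fintype.card ι * (1 + a) ^ (Fintype.card ι - 1) + 1), fun x t ht => ?_⟩
  have ht0 : 0 ≤ t := by linarith
  refine abs_sub_mul_pow_le_of_bounds _ (Nat.cast_nonneg _) ENNReal.toReal_nonneg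
    (by positivity) ht.le ?_ fun hat => ?_
  · rw [mul_comm, ← hvol x (by positivity)]
    exact ncard_le_toReal_volume_of_add_closedBall_subset inter_subset_right
      ((add_subset_add_right inter_subset_left).trans (hgrow ht0 x))
      ((hb.smul₀ _).vadd _).measure_lt_top.ne
  · rw [mul_comm, ← hvol x (sub_nonneg.mpr hat)]
    refine toReal_volume_le_ncard_inter_intPoints ?_ ((hb.smul₀ t).vadd _)
    simpa using hgrow (sub_nonneg.mpr hat) x

lemma ncard_inter_intPoints_le_of_forall_apply_eq [DecidableEq ι] {A : Set (ι → ℝ)}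
    {f : (ι → ℝ) →ₗ[ℝ] ℝ} (hf : f ≠ 0) {b : ℝ} (hAf : ∀ p ∈ A, f p = b)
    {z : ι → ℝ} {r : ℝ} (hr : 0 ≤ r) (hAr : A ⊆ closedBall z r) :
    ((A ∩ intPoints ι).ncard : ℝ) ≤ (2 * r + 2) ^ (Fintype.card ι - 1) := by
  obtain ⟨i₀, hi₀⟩ : ∃ i₀, f (Pi.single i₀ 1) ≠ 0 := by
    by_contra! h
    exact hf ((Pi.basisFun ℝ ι).ext fun i => by simpa using h i)
  let π : (ι → ℝ) → ({i // i ≠ i₀} → ℝ) := fun p i => p i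
  have hπ : ∀ p q, ‖π p - π q‖ ≤ ‖p - q‖ := fun p q =>
    (pi_norm_le_iff_of_nonneg (norm_nonneg _)).mpr fun i => norm_le_pi_norm (p - q) i
  -- a point of the hyperplane `f = b` is determined by its coordinates other than `i₀`
  have hinj : InjOn π (A ∩ intPoints ι) := fun p hp q hq hpq => by
    have hdiff : p - q = (p i₀ - q i₀) • Pi.single i₀ 1 := by
      ext i
      rcases eq_or_ne i i₀ with rfl | hi
      · simp
      · simpa [hi, sub_eq_zero] using congrFun hpq ⟨i, hi⟩
    have hf0 : (p i₀ - q i₀) * f (Pi.single i₀ 1) = 0 := by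
      rw [← smul_eq_mul, ← map_smul, ← hdiff, map_sub, hAf p hp.1, hAf q hq.1, sub_self]
    rw [← sub_eq_zero, hdiff, (mul_eq_zero.mp hf0).resolve_right hi₀, zero_smul]
  have himage : π '' (A ∩ intPoints ι) + closedBall 0 1 ⊆ closedBall (π z) (r + 1) := by
    rintro _ ⟨_, ⟨p, hp, rfl⟩, w, hw, rfl⟩
    rw [mem_closedBall_zero_iff] at hw
    rw [mem_closedBall, dist_eq_norm, add_sub_right_comm]
    refine (norm_add_le _ _).trans (add_le_add ((hπ p z).trans ?_) hw)
    simpa [dist_eq_norm] using hAr hp.1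
  calc ((A ∩ intPoints ι).ncard : ℝ) = (π '' (A ∩ intPoints ι)).ncard := by
        rw [hinj.ncard_image]
    _ ≤ (volume (closedBall (π z) (r + 1))).toReal :=
        ncard_le_toReal_volume_of_add_closedBall_subset
          (image_subset_iff.mpr fun p hp i => hp.2 i) himage measure_closedBall_lt_top.ne
    _ = (2 * r + 2) ^ (Fintype.card ι - 1) := by
        rw [Real.volume_pi_closedBall _ (by linarith), ENNReal.toReal_ofReal (by positivity),
          Fintype.card_subtype_compl, Fintype.card_subtype_eq]
        ring

lemma latticeCountEstimate_of_affineSpan_ne_top {P : Set (ι → ℝ)} (hb : IsBounded P)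
    (hne : P.Nonempty) (hspan : affineSpan ℝ P ≠ ⊤) : LatticeCountEstimate P := by
  classical
  have hvol : volume P = 0 := measure_mono_null (subset_affineSpan ℝ P)
    (Measure.addHaar_affineSubspace volume _ hspan)
  obtain ⟨p₀, hp₀⟩ := hne
  have hdir : (affineSpan ℝ P).direction < ⊤ := lt_top_iff_ne_top.mpr fun h => hspan <|
    (AffineSubspace.direction_eq_top_iff_of_nonempty ⟨p₀, subset_affineSpan ℝ P hp₀⟩).mp h
  obtain ⟨f, hf, hker⟩ := (affineSpan ℝ P).direction.exists_le_ker_of_lt_top hdir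
  have hfP : ∀ q ∈ P, f q = f p₀ := fun q hq => by
    rw [← sub_eq_zero, ← map_sub]
    exact hker (AffineSubspace.vsub_mem_direction (subset_affineSpan ℝ P hq)
      (subset_affineSpan ℝ P hp₀))
  obtain ⟨R, hR, hPR⟩ := hb.subset_closedBall_lt 0 0
  refine ⟨(2 * R + 2) ^ (Fintype.card ι - 1), fun x t ht => ?_⟩
  have ht0 : 0 ≤ t := by linarith
  rw [hvol, ENNReal.toReal_zero, zero_mul, sub_zero, Nat.abs_cast]
  calc _ ≤ (2 * (t * R) + 2) ^ (Fintype.card ι - 1) := by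
        refine ncard_inter_intPoints_le_of_forall_apply_eq hf (b := -f x + t * f p₀) ?_
          (by positivity) (z := -x) ?_
        · rintro _ ⟨_, ⟨q, hq, rfl⟩, rfl⟩
          simp [hfP q hq]
        · rw [← vadd_closedBall_zero]
          refine vadd_set_mono ((smul_set_mono hPR).trans ?_)
          rw [smul_closedBall _ _ hR.le, smul_zero, Real.norm_of_nonneg ht0]
    _ ≤ ((2 * R + 2) * t) ^ (Fintype.card ι - 1) := by gcongr; nlinarith
    _ = (2 * R + 2) ^ (Fintype.card ι - 1) * t ^ (Fintype.card ι - 1) := mul_pow ..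

lemma Convex.latticeCountEstimate {P : Set (ι → ℝ)} (hP : Convex ℝ P) (hb : IsBounded P) :
    LatticeCountEstimate P := by
  rcases P.eq_empty_or_nonempty with rfl | hne
  · exact ⟨0, fun x t _ => by simp⟩
  by_cases hint : (interior P).Nonempty
  · obtain ⟨c, hc⟩ := hint
    obtain ⟨ρ, hρ, hball⟩ := nhds_basis_closedBall.mem_iff.mp (mem_interior_iff_mem_nhds.mp hc)
    rw [← vadd_neg_vadd c P]
    refine (latticeCountEstimate_of_closedBall_subset (hP.vadd (-c)) (hb.vadd (-c)) hρ ?_).vadd c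
    rw [← vadd_closedBall_zero] at hball
    exact vadd_set_subset_iff_subset_neg_vadd_set.mp hball
  · exact latticeCountEstimate_of_affineSpan_ne_top hb hne
      (mt hP.interior_nonempty_iff_affineSpan_eq_top.mpr hint)

/-- trivial lattice point count for translated dilates of a polytope,
uniform in the translation. -/
theorem stmt13 (d : ℕ) (V : Finset (Fin d → ℝ)) :
    ∃ K : ℝ, ∀ x : Fin d → ℝ, ∀ t : ℝ, 1 < t →
      |(Set.ncard ({p : Fin d → ℝ |
            ∃ q ∈ convexHull ℝ (V : Set (Fin d → ℝ)), p = t • q - x} ∩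
          {p : Fin d → ℝ | ∀ i, ∃ n : ℤ, p i = n}) : ℝ) -
        (MeasureTheory.volume (convexHull ℝ (V : Set (Fin d → ℝ)))).toReal * t ^ d|
        ≤ K * t ^ (d - 1) := by
  obtain ⟨K, hK⟩ := (convex_convexHull ℝ (V : Set (Fin d → ℝ))).latticeCountEstimate
    ((V.finite_toSet.isCompact_convexHull ℝ).isBounded)
  refine ⟨K, fun x t ht => ?_⟩
  have hset : {p : Fin d → ℝ | ∃ q ∈ convexHull ℝ (V : Set (Fin d → ℝ)), p = t • q - x} =
      (-x) +ᵥ t • convexHull ℝ (V : Set (Fin d → ℝ)) := by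
    ext p
    simp [mem_vadd_set, mem_smul_set, eq_comm, sub_eq_neg_add]
  simpa [hset, Fintype.card_fin, intPoints] using hK x t ht
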